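/- Under the stick-breaking construction with i.i.d. Beta(1,α) variables and a Hilbert space family (v_i) with ‖v_i‖² ≤ R, the expected squared truncation error satisfies E[‖∑_{i=1}^∞ π_i v_i − ∑_{i=1}^T π_i v_i‖²] ≤ R · (α/(1+α))^T. -/

import Mathlib

/-!
Put `Q_n = ∏_{k<n} (1 - β_k)`. The stick-breaking weights telescope, `∑_{i<n} π_i = 1 - Q_n`, so
the weights beyond `T` have total mass at most `Q_T ∈ [0, 1]`. Since `‖v_i‖ ≤ √R`, the truncation
error has norm at most `√R · Q_T`, hence squared norm at most `R · Q_T² ≤ R · Q_T`. By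
independence `E[Q_T] = (E[1 - β])^T`, and `E[1 - β] = α / (1 + α)` for `β ~ Beta(1, α)`.
-/

open MeasureTheory ProbabilityTheory

/-- The Beta(1, α) distribution on ℝ, with density `α (1-x)^(α-1)` on `[0,1]`. -/
noncomputable def betaOneMeasure (α : ℝ) : Measure ℝ :=
  volume.withDensity
    (fun x => ENNReal.ofReal (if x ∈ Set.Icc (0:ℝ) 1 then α * (1 - x) ^ (α - 1) else 0))

open Finset

def stickBreakingWeight (b : ℕ → ℝ) (i : ℕ) : ℝ := b i * ∏ k ∈ range i, (1 - b k)

lemma sum_range_stickBreakingWeight (b : ℕ → ℝ) (n : ℕ) :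
    ∑ i ∈ range n, stickBreakingWeight b i = 1 - ∏ k ∈ range n, (1 - b k) := by
  induction n with
  | zero => simp
  | succ n ih => rw [sum_range_succ, ih, prod_range_succ, stickBreakingWeight]; ring

section UnitInterval

variable {b : ℕ → ℝ} (hb : ∀ k, b k ∈ Set.Icc (0:ℝ) 1)
include hb

lemma prod_one_sub_nonneg (n : ℕ) : 0 ≤ ∏ k ∈ range n, (1 - b k) :=
  prod_nonneg fun k _ => sub_nonneg.2 (hb k).2

lemma prod_one_sub_le_one (n : ℕ) : ∏ k ∈ range n, (1 - b k) ≤ 1 :=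
  prod_le_one (fun k _ => sub_nonneg.2 (hb k).2) fun k _ => sub_le_self _ (hb k).1

lemma stickBreakingWeight_nonneg (i : ℕ) : 0 ≤ stickBreakingWeight b i :=
  mul_nonneg (hb i).1 (prod_one_sub_nonneg hb i)

lemma sum_range_stickBreakingWeight_le_one (n : ℕ) :
    ∑ i ∈ range n, stickBreakingWeight b i ≤ 1 := by
  rw [sum_range_stickBreakingWeight]
  linarith [prod_one_sub_nonneg hb n]

lemma summable_stickBreakingWeight : Summable (stickBreakingWeight b) :=
  summable_of_sum_range_le (stickBreakingWeight_nonneg hb) (sum_range_stickBreakingWeight_le_one hb)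

lemma tsum_stickBreakingWeight_sub_sum_range_le (T : ℕ) :
    ∑' i, stickBreakingWeight b i - ∑ i ∈ range T, stickBreakingWeight b i
      ≤ ∏ k ∈ range T, (1 - b k) := by
  have htsum : ∑' i, stickBreakingWeight b i ≤ 1 :=
    (summable_stickBreakingWeight hb).tsum_le_of_sum_range_le
      (sum_range_stickBreakingWeight_le_one hb)
  rw [sum_range_stickBreakingWeight]
  linarith

end UnitInterval

lemma norm_tsum_smul_sub_sum_range_le {E : Type*} [NormedAddCommGroup E] [NormedSpace ℝ E]
    [CompleteSpace E] {p : ℕ → ℝ} (hp : ∀ i, 0 ≤ p i) (hps : Summable p) {v : ℕ → E} {C : ℝ}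
    (hv : ∀ i, ‖v i‖ ≤ C) (T : ℕ) :
    ‖∑' i, p i • v i - ∑ i ∈ range T, p i • v i‖ ≤ C * (∑' i, p i - ∑ i ∈ range T, p i) := by
  have hnorm : ∀ i, ‖p i • v i‖ ≤ p i * C := fun i => by
    rw [norm_smul, Real.norm_of_nonneg (hp i)]
    exact mul_le_mul_of_nonneg_left (hv i) (hp i)
  have hpvs : Summable fun i => p i • v i := .of_norm_bounded (hps.mul_right C) hnorm
  rw [← hpvs.sum_add_tsum_nat_add T, ← hps.sum_add_tsum_nat_add T, add_sub_cancel_left,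
    add_sub_cancel_left, ← tsum_mul_left]
  exact tsum_of_norm_bounded (((summable_nat_add_iff T).2 hps).mul_left C).hasSum
    fun i => (hnorm _).trans_eq (mul_comm _ _)

lemma norm_sq_tsum_stickBreakingWeight_smul_sub_le {E : Type*} [NormedAddCommGroup E]
    [NormedSpace ℝ E] [CompleteSpace E] {b : ℕ → ℝ} (hb : ∀ k, b k ∈ Set.Icc (0:ℝ) 1)
    {v : ℕ → E} {R : ℝ} (hv : ∀ i, ‖v i‖ ^ 2 ≤ R) (T : ℕ) :
    ‖∑' i, stickBreakingWeight b i • v i - ∑ i ∈ range T, stickBreakingWeight b i • v i‖ ^ 2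
      ≤ R * ∏ k ∈ range T, (1 - b k) := by
  set Q := ∏ k ∈ range T, (1 - b k)
  have hR : 0 ≤ R := (sq_nonneg _).trans (hv 0)
  have hnorm : ‖∑' i, stickBreakingWeight b i • v i
      - ∑ i ∈ range T, stickBreakingWeight b i • v i‖ ≤ √R * Q :=
    (norm_tsum_smul_sub_sum_range_le (stickBreakingWeight_nonneg hb)
      (summable_stickBreakingWeight hb) (fun i => Real.le_sqrt_of_sq_le (hv i)) T).trans
      (mul_le_mul_of_nonneg_left (tsum_stickBreakingWeight_sub_sum_range_le hb T) (by positivity))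
  calc _ ≤ (√R * Q) ^ 2 := pow_le_pow_left₀ (norm_nonneg _) hnorm 2
    _ = R * Q ^ 2 := by rw [mul_pow, Real.sq_sqrt hR]
    _ ≤ R * Q := mul_le_mul_of_nonneg_left
      (pow_le_of_le_one (prod_one_sub_nonneg hb T) (prod_one_sub_le_one hb T) two_ne_zero) hR

lemma measurable_betaOneDensity (α : ℝ) :
    Measurable fun x : ℝ ↦
      ENNReal.ofReal (if x ∈ Set.Icc (0:ℝ) 1 then α * (1 - x) ^ (α - 1) else 0) :=
  (Measurable.ite measurableSet_Icc (by fun_prop) measurable_const).ennreal_ofReal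

lemma ae_mem_Icc_betaOneMeasure (α : ℝ) : ∀ᵐ x ∂betaOneMeasure α, x ∈ Set.Icc (0:ℝ) 1 := by
  refine (ae_withDensity_iff (measurable_betaOneDensity α)).2 (ae_of_all _ fun x hx => ?_)
  by_contra hx'
  simp [hx'] at hx

lemma integral_one_sub_betaOneMeasure {α : ℝ} (hα : 0 < α) :
    ∫ x, (1 - x) ∂betaOneMeasure α = α / (1 + α) := by
  have hdensity : ∀ x : ℝ,
      (ENNReal.ofReal (if x ∈ Set.Icc (0:ℝ) 1 then α * (1 - x) ^ (α - 1) else 0)).toReal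
        • (1 - x) = (Set.Icc (0:ℝ) 1).indicator (fun y => α * (1 - y) ^ α) x := by
    intro x
    by_cases hx : x ∈ Set.Icc (0:ℝ) 1
    · have h1x : 0 ≤ 1 - x := sub_nonneg.2 hx.2
      rw [if_pos hx, Set.indicator_of_mem hx, ENNReal.toReal_ofReal (by positivity), smul_eq_mul,
        mul_assoc]
      rcases h1x.eq_or_lt with h | h
      · simp [← h, Real.zero_rpow hα.ne']
      · rw [Real.rpow_sub_one h.ne', div_mul_cancel₀ _ h.ne']
    · simp [hx]
  rw [betaOneMeasure, integral_withDensity_eq_integral_toReal_smul (measurable_betaOneDensity α)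
      (ae_of_all _ fun _ => ENNReal.ofReal_lt_top)]
  simp_rw [hdensity]
  rw [integral_indicator measurableSet_Icc, integral_Icc_eq_integral_Ioc,
    ← intervalIntegral.integral_of_le zero_le_one, intervalIntegral.integral_const_mul,
    intervalIntegral.integral_comp_sub_left (fun x => x ^ α), integral_rpow (by left; linarith)]
  simp [Real.zero_rpow (by positivity : α + 1 ≠ 0), add_comm, div_eq_mul_inv]

lemma ProbabilityTheory.iIndepFun.integral_prod_range_comp_eq_pow {Ω 𝓧 𝕜 : Type*}
    [MeasurableSpace Ω] [MeasurableSpace 𝓧] [RCLike 𝕜] {μ : Measure Ω} {X : ℕ → Ω → 𝓧}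
    (hX : iIndepFun X μ) (mX : ∀ i, AEMeasurable (X i) μ) {ν : Measure 𝓧}
    (hν : ∀ i, μ.map (X i) = ν) {f : 𝓧 → 𝕜} (hf : AEStronglyMeasurable f ν) (n : ℕ) :
    ∫ ω, ∏ k ∈ range n, f (X k ω) ∂μ = (∫ x, f x ∂ν) ^ n := by
  have h := (hX.precomp (Fin.val_injective (n := n))).integral_fun_prod_comp (f := fun _ => f)
    (fun i => mX i) (fun i => by rw [hν]; exact hf)
  have hfX : ∀ k, ∫ ω, f (X k ω) ∂μ = ∫ x, f x ∂ν := fun k => by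
    rw [← hν k, integral_map (mX k) (hν k ▸ hf)]
  simp_rw [Finset.prod_range, h, hfX, prod_const, card_univ, Fintype.card_fin]

theorem expected_truncation_error_general {Ω : Type*} [MeasurableSpace Ω]
    (μ : Measure Ω) [IsProbabilityMeasure μ] (α : ℝ) (hα : 0 < α)
    (β : ℕ → Ω → ℝ) (hmeas : ∀ i, Measurable (β i))
    (hindep : iIndepFun (m := fun _ => Real.measurableSpace) β μ)
    (hdist : ∀ i, Measure.map (β i) μ = betaOneMeasure α)
    (π : ℕ → Ω → ℝ)
    (hπ : ∀ i ω, π i ω = β i ω * ∏ k ∈ Finset.range i, (1 - β k ω))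
    {H : Type*} [NormedAddCommGroup H] [InnerProductSpace ℝ H] [CompleteSpace H]
    (R : ℝ) (v : ℕ → H) (hv : ∀ i, ‖v i‖ ^ 2 ≤ R) (T : ℕ) :
    ∫ ω, ‖(∑' i, π i ω • v i) - ∑ i ∈ Finset.range T, π i ω • v i‖ ^ 2 ∂μ
      ≤ R * (α / (1 + α)) ^ T := by
  have hR : 0 ≤ R := (sq_nonneg _).trans (hv 0)
  have hβ : ∀ᵐ ω ∂μ, ∀ k, β k ω ∈ Set.Icc (0:ℝ) 1 := ae_all_iff.2 fun k =>
    ae_of_ae_map (hmeas k).aemeasurable (hdist k ▸ ae_mem_Icc_betaOneMeasure α)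
  have hQ_int : Integrable (fun ω => R * ∏ k ∈ range T, (1 - β k ω)) μ := by
    refine .of_bound (by fun_prop) R (hβ.mono fun ω hω => ?_)
    rw [Real.norm_of_nonneg (mul_nonneg hR (prod_one_sub_nonneg hω T))]
    exact mul_le_of_le_one_right hR (prod_one_sub_le_one hω T)
  calc _ ≤ ∫ ω, R * ∏ k ∈ range T, (1 - β k ω) ∂μ := by
        refine integral_mono_of_nonneg (ae_of_all _ fun _ => by positivity) hQ_int
          (hβ.mono fun ω hω => ?_)
        simpa only [hπ, stickBreakingWeight] using
          norm_sq_tsum_stickBreakingWeight_smul_sub_le hω hv T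
    _ = R * (α / (1 + α)) ^ T := by
      rw [integral_const_mul, hindep.integral_prod_range_comp_eq_pow
        (fun k => (hmeas k).aemeasurable) hdist (f := fun x => 1 - x) (by fun_prop),
        integral_one_sub_betaOneMeasure hα]

/-- Expected squared truncation error of the stick-breaking mixture embedding:
`E[‖∑_{i=1}^∞ π_i v_i − ∑_{i=1}^T π_i v_i‖²] ≤ R (α/(1+α))^T`. -/
theorem expected_truncation_error {Ω : Type*} [MeasurableSpace Ω]
    (μ : Measure Ω) [IsProbabilityMeasure μ] (α : ℝ) (hα : 0 < α)
    (β : ℕ → Ω → ℝ) (hmeas : ∀ i, Measurable (β i))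
    (hindep : iIndepFun (m := fun _ => Real.measurableSpace) β μ)
    (hdist : ∀ i, Measure.map (β i) μ = betaOneMeasure α)
    (π : ℕ → Ω → ℝ)
    (hπ : ∀ i ω, π i ω = β i ω * ∏ k ∈ Finset.range i, (1 - β k ω))
    {H : Type*} [NormedAddCommGroup H] [InnerProductSpace ℝ H] [CompleteSpace H]
    (R : ℝ) (hR : 0 ≤ R) (v : ℕ → H) (hv : ∀ i, ‖v i‖ ^ 2 ≤ R) (T : ℕ) :
    ∫ ω, ‖(∑' i, π i ω • v i) - ∑ i ∈ Finset.range T, π i ω • v i‖ ^ 2 ∂μ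
      ≤ R * (α / (1 + α)) ^ T :=
  expected_truncation_error_general μ α hα β hmeas hindep hdist π hπ R v hv T
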